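/- Let 0 < α < n, δ > 0, t ∈ ℝ^n with |x−y| > δ implying the kernel difference bound. Define E(x) = ∫_{|x−y|>δ} | |x+t−y|^{α−n} − |x−y|^{α−n} | · |g(2x+2t−y) f(y)| dy. Then E(x) ≤ C (|t|/δ) BM_α(f, τ_{2t}g)(x), where τ_a g(x) = g(x+a) and BM_α is the bilinear fractional maximal operator, provided |t| < δ/2. -/

import Mathlib

open Real MeasureTheory ENNReal

/-- The bilinear fractional maximal operator `BM_α` (ℝ≥0∞-valued). -/
noncomputable def BM {n : ℕ} (α : ℝ)
    (f g : EuclideanSpace ℝ (Fin n) → ℝ) (x : EuclideanSpace ℝ (Fin n)) : ℝ≥0∞ :=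
  ⨆ (r : ℝ) (_ : 0 < r),
    ENNReal.ofReal (r ^ (α - n)) *
      ∫⁻ y in {y | ‖y‖ < r}, ENNReal.ofReal |f (x - y) * g (x + y)|

lemma kernel_diff_bound {n : ℕ} (α : ℝ) (hαn : α < n) {a b s : ℝ}
    (ha : 0 < a) (hb : a/2 ≤ b) (hab : |b - a| ≤ s) :
    |b ^ (α - (n:ℝ)) - a ^ (α - (n:ℝ))| ≤ (((n:ℝ) - α) * (a/2) ^ (α - (n:ℝ) - 1)) * s := by
  have ha2 : (0:ℝ) < a/2 := by linarith
  have hC0 : (0:ℝ) ≤ ((n:ℝ) - α) * (a/2) ^ (α - (n:ℝ) - 1) := by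
    apply mul_nonneg (by linarith) (Real.rpow_nonneg ha2.le _)
  have key : ∀ u ∈ Set.Ici (a/2), ∀ v ∈ Set.Ici (a/2),
      |u ^ (α - (n:ℝ)) - v ^ (α - (n:ℝ))| ≤ (((n:ℝ) - α) * (a/2) ^ (α - (n:ℝ) - 1)) * |u - v| := by
    intro u hu v hv
    have hdiff : ∀ w ∈ Set.Ici (a/2), DifferentiableAt ℝ (fun z : ℝ => z ^ (α - (n:ℝ))) w := by
      intro w hw
      exact (Real.hasDerivAt_rpow_const
        (Or.inl (by simp only [Set.mem_Ici] at hw; linarith))).differentiableAt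
    have hbound : ∀ w ∈ Set.Ici (a/2),
        ‖deriv (fun z : ℝ => z ^ (α - (n:ℝ))) w‖ ≤ ((n:ℝ) - α) * (a/2) ^ (α - (n:ℝ) - 1) := by
      intro w hw
      simp only [Set.mem_Ici] at hw
      have hw0 : (0:ℝ) < w := lt_of_lt_of_le ha2 hw
      rw [Real.deriv_rpow_const]
      rw [Real.norm_eq_abs, abs_mul, abs_of_pos (Real.rpow_pos_of_pos hw0 _)]
      have h1 : |α - (n:ℝ)| = (n:ℝ) - α := by rw [abs_of_neg (by linarith)]; ring
      rw [h1]
      exact mul_le_mul_of_nonneg_left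
        (Real.rpow_le_rpow_of_nonpos ha2 hw (by linarith)) (by linarith)
    have := (convex_Ici (a/2)).norm_image_sub_le_of_norm_deriv_le hdiff hbound hv hu
    simpa [Real.norm_eq_abs] using this
  have hb' : b ∈ Set.Ici (a/2) := hb
  have ha' : a ∈ Set.Ici (a/2) := by simp only [Set.mem_Ici]; linarith
  calc |b ^ (α - (n:ℝ)) - a ^ (α - (n:ℝ))|
      ≤ (((n:ℝ) - α) * (a/2) ^ (α - (n:ℝ) - 1)) * |b - a| := key b hb' a ha'
    _ ≤ _ := by apply mul_le_mul_of_nonneg_left hab hC0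

lemma exists_annulus {δ a : ℝ} (hδ : 0 < δ) (h : δ < a) :
    ∃ k : ℕ, δ * 2 ^ k < a ∧ a ≤ δ * 2 ^ (k + 1) := by
  have hex : ∃ m : ℕ, a ≤ δ * 2 ^ (m + 1) := by
    obtain ⟨m, hm⟩ := pow_unbounded_of_one_lt (a / δ) (by norm_num : (1:ℝ) < 2)
    refine ⟨m, ?_⟩
    have : a < δ * 2 ^ m := by
      rw [div_lt_iff₀ hδ] at hm; linarith [hm]
    have h2 : δ * 2 ^ m ≤ δ * 2 ^ (m + 1) := by
      apply mul_le_mul_of_nonneg_left _ hδ.le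
      exact pow_le_pow_right₀ (by norm_num) (Nat.le_succ m)
    linarith
  classical
  let k := Nat.find hex
  refine ⟨k, ?_, Nat.find_spec hex⟩
  rcases Nat.eq_zero_or_pos k with hk | hk
  · rw [hk]; simpa using h
  · have := Nat.find_min hex (m := k - 1) (by omega)
    push_neg at this
    have hkk : k - 1 + 1 = k := by omega
    rwa [hkk] at this

lemma ck_arith {n : ℕ} (α δ T u : ℝ) (hδ : 0 < δ) (k : ℕ) (hu_def : u = δ * 2 ^ k) :
    ((n:ℝ) - α) * T * (u / 2) ^ (α - (n:ℝ) - 1) * (4 * u) ^ ((n:ℝ) - α)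
      = (((n:ℝ) - α) * ((2:ℝ)⁻¹) ^ (α - (n:ℝ) - 1) * (4:ℝ) ^ ((n:ℝ) - α)) * (T / δ) *
        (1/2 : ℝ) ^ k := by
  have hu : (0:ℝ) < u := by rw [hu_def]; positivity
  have h1 : (u / 2) ^ (α - (n:ℝ) - 1) = u ^ (α - (n:ℝ) - 1) * ((2:ℝ)⁻¹) ^ (α - (n:ℝ) - 1) := by
    rw [div_eq_mul_inv, Real.mul_rpow hu.le (by norm_num)]
  have h2 : (4 * u) ^ ((n:ℝ) - α) = (4:ℝ) ^ ((n:ℝ) - α) * u ^ ((n:ℝ) - α) :=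
    Real.mul_rpow (by norm_num) hu.le
  have h3 : u ^ (α - (n:ℝ) - 1) * u ^ ((n:ℝ) - α) = u⁻¹ := by
    rw [← Real.rpow_add hu, show α - (n:ℝ) - 1 + ((n:ℝ) - α) = -1 by ring, Real.rpow_neg_one]
  have h4 : u⁻¹ = δ⁻¹ * (1/2 : ℝ) ^ k := by
    rw [hu_def, mul_inv, ← inv_pow]; norm_num
  calc ((n:ℝ) - α) * T * (u / 2) ^ (α - (n:ℝ) - 1) * (4 * u) ^ ((n:ℝ) - α)
      = (((n:ℝ) - α) * ((2:ℝ)⁻¹) ^ (α - (n:ℝ) - 1) * (4:ℝ) ^ ((n:ℝ) - α)) * T *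
          (u ^ (α - (n:ℝ) - 1) * u ^ ((n:ℝ) - α)) := by rw [h1, h2]; ring
    _ = _ := by rw [h3, h4]; field_simp

/-- Estimate for the term `E` in the proof of separate compactness for `BI_α`. -/
theorem BI_term_E_estimate (n : ℕ) (hn : 0 < n) (α : ℝ) (hα : 0 < α) (hαn : α < n) :
    ∃ C : ℝ, 0 < C ∧ ∀ (f g : EuclideanSpace ℝ (Fin n) → ℝ),
      Measurable f → Measurable g →
      ∀ (δ : ℝ) (t : EuclideanSpace ℝ (Fin n)), 0 < δ → ‖t‖ < δ / 2 →
      ∀ x, ENNReal.ofReal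
          (∫ y in {y | δ < ‖x - y‖},
            |‖x + t - y‖ ^ (α - n) - ‖x - y‖ ^ (α - n)| *
              |g ((2 : ℝ) • x + (2 : ℝ) • t - y) * f y|) ≤
        ENNReal.ofReal (C * (‖t‖ / δ)) *
          BM α f (fun z => g (z + (2 : ℝ) • t)) x := by
  have hnα : (0:ℝ) < (n:ℝ) - α := by
    have : α < (n:ℝ) := hαn
    linarith
  set C₀ : ℝ := ((n:ℝ) - α) * ((2:ℝ)⁻¹) ^ (α - (n:ℝ) - 1) * (4:ℝ) ^ ((n:ℝ) - α) with hC₀def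
  have hC₀pos : 0 < C₀ := by
    apply mul_pos (mul_pos hnα (Real.rpow_pos_of_pos (by norm_num) _))
      (Real.rpow_pos_of_pos (by norm_num) _)
  refine ⟨2 * C₀, by positivity, ?_⟩
  intro f g hf hg δ t hδ ht x
  set g' : EuclideanSpace ℝ (Fin n) → ℝ := fun z => g (z + (2:ℝ) • t) with hg'def
  set S : Set (EuclideanSpace ℝ (Fin n)) := {y | δ < ‖x - y‖} with hSdef
  by_cases hint : Integrable (fun y =>
      |‖x + t - y‖ ^ (α - (n:ℝ)) - ‖x - y‖ ^ (α - (n:ℝ))| *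
        |g ((2 : ℝ) • x + (2 : ℝ) • t - y) * f y|) (volume.restrict S)
  swap
  · rw [integral_undef hint]
    simp
  rw [MeasureTheory.ofReal_integral_eq_lintegral_ofReal hint
    (Filter.Eventually.of_forall fun y => mul_nonneg (abs_nonneg _) (abs_nonneg _))]
  -- annuli
  set A : ℕ → Set (EuclideanSpace ℝ (Fin n)) := fun k => {y | δ * 2 ^ k < ‖x - y‖ ∧ ‖x - y‖ ≤ δ * 2 ^ (k + 1)} with hAdef
  have hmeas_norm : Measurable fun y : EuclideanSpace ℝ (Fin n) => ‖x - y‖ :=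
    (continuous_const.sub continuous_id).norm.measurable
  have hAmeas : ∀ k, MeasurableSet (A k) := fun k =>
    (measurableSet_lt measurable_const hmeas_norm).inter
      (measurableSet_le hmeas_norm measurable_const)
  have hAdisj : Pairwise (Function.onFun Disjoint A) := by
    have key : ∀ i j, i < j → Disjoint (A i) (A j) := by
      intro i j hij
      rw [Set.disjoint_left]
      rintro y ⟨_, h2⟩ ⟨h3, _⟩
      have hle : δ * 2 ^ (i + 1) ≤ δ * 2 ^ j := by
        apply mul_le_mul_of_nonneg_left _ hδ.le
        exact pow_le_pow_right₀ (by norm_num) (by omega)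
      linarith
    intro i j hij
    rcases hij.lt_or_gt with h | h
    · exact key _ _ h
    · exact (key _ _ h).symm
  have hSA : S = ⋃ k, A k := by
    ext y
    simp only [hSdef, hAdef, Set.mem_setOf_eq, Set.mem_iUnion]
    constructor
    · intro h
      exact exists_annulus hδ h
    · rintro ⟨k, hk1, -⟩
      have : δ ≤ δ * 2 ^ k := by
        nth_rewrite 1 [← mul_one δ]
        apply mul_le_mul_of_nonneg_left _ hδ.le
        exact one_le_pow₀ (by norm_num)
      linarith
  rw [hSdef] at *
  rw [hSA, lintegral_iUnion hAmeas hAdisj]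
  -- bound each term
  have hterm : ∀ k : ℕ, (∫⁻ y in A k, ENNReal.ofReal
      (|‖x + t - y‖ ^ (α - (n:ℝ)) - ‖x - y‖ ^ (α - (n:ℝ))| *
        |g ((2 : ℝ) • x + (2 : ℝ) • t - y) * f y|)) ≤
      ENNReal.ofReal (C₀ * (‖t‖ / δ) * (1/2 : ℝ) ^ k) * BM α f g' x := by
    intro k
    set u : ℝ := δ * 2 ^ k with hu_def
    have hu : (0:ℝ) < u := by positivity
    have hδu : δ ≤ u := by
      nth_rewrite 1 [← mul_one δ]
      exact mul_le_mul_of_nonneg_left (one_le_pow₀ (by norm_num)) hδ.le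
    set c1 : ℝ := ((n:ℝ) - α) * ‖t‖ * (u / 2) ^ (α - (n:ℝ) - 1) with hc1def
    have hc1 : 0 ≤ c1 := by
      apply mul_nonneg (mul_nonneg hnα.le (norm_nonneg _)) (Real.rpow_nonneg (by positivity) _)
    -- pointwise bound on the annulus
    have hpt : ∀ y ∈ A k,
        |‖x + t - y‖ ^ (α - (n:ℝ)) - ‖x - y‖ ^ (α - (n:ℝ))| *
          |g ((2 : ℝ) • x + (2 : ℝ) • t - y) * f y| ≤
        c1 * |g ((2 : ℝ) • x + (2 : ℝ) • t - y) * f y| := by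
      rintro y ⟨h1, -⟩
      have ha : (0:ℝ) < ‖x - y‖ := lt_of_le_of_lt (by positivity) h1
      have hδa : δ < ‖x - y‖ := lt_of_le_of_lt hδu h1
      have htt : |‖x + t - y‖ - ‖x - y‖| ≤ ‖t‖ := by
        have h := abs_norm_sub_norm_le (x + t - y) (x - y)
        have he : (x + t - y) - (x - y) = t := by abel
        rwa [he] at h
      have hb : ‖x - y‖ / 2 ≤ ‖x + t - y‖ := by
        have := abs_le.1 htt
        have h2 := this.1
        linarith [ht, hδa]
      have hker := kernel_diff_bound α hαn ha hb htt
      have hmono : (‖x - y‖ / 2) ^ (α - (n:ℝ) - 1) ≤ (u / 2) ^ (α - (n:ℝ) - 1) := by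
        apply Real.rpow_le_rpow_of_nonpos (by linarith) (by linarith) (by linarith)
      have hker2 : |‖x + t - y‖ ^ (α - (n:ℝ)) - ‖x - y‖ ^ (α - (n:ℝ))| ≤ c1 := by
        calc |‖x + t - y‖ ^ (α - (n:ℝ)) - ‖x - y‖ ^ (α - (n:ℝ))|
            ≤ (((n:ℝ) - α) * (‖x - y‖/2) ^ (α - (n:ℝ) - 1)) * ‖t‖ := hker
          _ ≤ (((n:ℝ) - α) * (u/2) ^ (α - (n:ℝ) - 1)) * ‖t‖ := by
              apply mul_le_mul_of_nonneg_right _ (norm_nonneg _)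
              exact mul_le_mul_of_nonneg_left hmono hnα.le
          _ = c1 := by rw [hc1def]; ring
      exact mul_le_mul_of_nonneg_right hker2 (abs_nonneg _)
    -- integrate
    have step1 : (∫⁻ y in A k, ENNReal.ofReal
        (|‖x + t - y‖ ^ (α - (n:ℝ)) - ‖x - y‖ ^ (α - (n:ℝ))| *
          |g ((2 : ℝ) • x + (2 : ℝ) • t - y) * f y|)) ≤
        ENNReal.ofReal c1 * ∫⁻ y in A k,
          ENNReal.ofReal |g ((2 : ℝ) • x + (2 : ℝ) • t - y) * f y| := by
      rw [← lintegral_const_mul' _ _ ENNReal.ofReal_ne_top]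
      apply setLIntegral_mono' (hAmeas k)
      intro y hy
      rw [← ENNReal.ofReal_mul hc1]
      exact ENNReal.ofReal_le_ofReal (hpt y hy)
    have step2 : (∫⁻ y in A k,
        ENNReal.ofReal |g ((2 : ℝ) • x + (2 : ℝ) • t - y) * f y|) ≤
        ∫⁻ y in {y : EuclideanSpace ℝ (Fin n) | ‖x - y‖ < 4 * u},
          ENNReal.ofReal |g ((2 : ℝ) • x + (2 : ℝ) • t - y) * f y| := by
      apply lintegral_mono_set
      rintro y ⟨-, h2⟩
      simp only [Set.mem_setOf_eq]
      have : δ * 2 ^ (k+1) = 2 * u := by rw [hu_def, pow_succ]; ring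
      rw [this] at h2
      linarith
    -- change of variables
    have hcv : (∫⁻ y in {y : EuclideanSpace ℝ (Fin n) | ‖x - y‖ < 4 * u},
        ENNReal.ofReal |g ((2 : ℝ) • x + (2 : ℝ) • t - y) * f y|) =
        ∫⁻ z in {z : EuclideanSpace ℝ (Fin n) | ‖z‖ < 4 * u}, ENNReal.ofReal |f (x - z) * g' (x + z)| := by
      have hmp : MeasurePreserving (fun z : EuclideanSpace ℝ (Fin n) => x - z) volume volume :=
        Measure.measurePreserving_sub_left volume x
      have hemb : MeasurableEmbedding (fun z : EuclideanSpace ℝ (Fin n) => x - z) :=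
        (MeasurableEquiv.subLeft x).measurableEmbedding
      have hset : (fun z : EuclideanSpace ℝ (Fin n) => x - z) ⁻¹' {y : EuclideanSpace ℝ (Fin n) | ‖x - y‖ < 4 * u} =
          {z : EuclideanSpace ℝ (Fin n) | ‖z‖ < 4 * u} := by
        ext z
        simp [_root_.sub_sub_cancel]
      have key := hmp.setLIntegral_comp_preimage_emb hemb
        (fun y => ENNReal.ofReal |g ((2 : ℝ) • x + (2 : ℝ) • t - y) * f y|)
        {y : EuclideanSpace ℝ (Fin n) | ‖x - y‖ < 4 * u}
      rw [hset] at key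
      rw [← key]
      refine lintegral_congr fun z => ?_
      simp only [hg'def]
      rw [show x + z + (2:ℝ) • t = (2 : ℝ) • x + (2 : ℝ) • t - (x - z) from by module,
        mul_comm]
    -- BM bound
    have hr : (0:ℝ) < 4 * u := by positivity
    have hrpos : (0:ℝ) < (4 * u) ^ (α - (n:ℝ)) := Real.rpow_pos_of_pos hr _
    have hBMge : ENNReal.ofReal ((4 * u) ^ (α - (n:ℝ))) *
        (∫⁻ z in {z : EuclideanSpace ℝ (Fin n) | ‖z‖ < 4 * u}, ENNReal.ofReal |f (x - z) * g' (x + z)|) ≤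
        BM α f g' x := by
      unfold BM
      exact le_iSup₂ (f := fun (r : ℝ) (_ : 0 < r) =>
        ENNReal.ofReal (r ^ (α - (n:ℝ))) *
          ∫⁻ y in {y : EuclideanSpace ℝ (Fin n) | ‖y‖ < r},
            ENNReal.ofReal |f (x - y) * g' (x + y)|) (4 * u) hr
    have hne : ENNReal.ofReal ((4 * u) ^ (α - (n:ℝ))) ≠ 0 :=
      (ENNReal.ofReal_pos.mpr hrpos).ne'
    have step3 : (∫⁻ z in {z : EuclideanSpace ℝ (Fin n) | ‖z‖ < 4 * u}, ENNReal.ofReal |f (x - z) * g' (x + z)|) ≤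
        ENNReal.ofReal ((4 * u) ^ ((n:ℝ) - α)) * BM α f g' x := by
      have hinv : (ENNReal.ofReal ((4 * u) ^ (α - (n:ℝ))))⁻¹ =
          ENNReal.ofReal ((4 * u) ^ ((n:ℝ) - α)) := by
        rw [← ENNReal.ofReal_inv_of_pos hrpos]
        congr 1
        rw [← Real.rpow_neg hr.le, neg_sub]
      calc (∫⁻ z in {z : EuclideanSpace ℝ (Fin n) | ‖z‖ < 4 * u}, ENNReal.ofReal |f (x - z) * g' (x + z)|)
          = (ENNReal.ofReal ((4 * u) ^ (α - (n:ℝ))))⁻¹ *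
            (ENNReal.ofReal ((4 * u) ^ (α - (n:ℝ))) *
              ∫⁻ z in {z : EuclideanSpace ℝ (Fin n) | ‖z‖ < 4 * u}, ENNReal.ofReal |f (x - z) * g' (x + z)|) := by
            rw [← mul_assoc ((ENNReal.ofReal ((4 * u) ^ (α - (n:ℝ))))⁻¹), ENNReal.inv_mul_cancel hne ENNReal.ofReal_ne_top, one_mul]
        _ ≤ (ENNReal.ofReal ((4 * u) ^ (α - (n:ℝ))))⁻¹ * BM α f g' x :=
            mul_le_mul_right hBMge _
        _ = _ := by rw [hinv]
    -- combine
    calc (∫⁻ y in A k, ENNReal.ofReal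
        (|‖x + t - y‖ ^ (α - (n:ℝ)) - ‖x - y‖ ^ (α - (n:ℝ))| *
          |g ((2 : ℝ) • x + (2 : ℝ) • t - y) * f y|))
        ≤ ENNReal.ofReal c1 * ∫⁻ y in A k,
            ENNReal.ofReal |g ((2 : ℝ) • x + (2 : ℝ) • t - y) * f y| := step1
      _ ≤ ENNReal.ofReal c1 * ∫⁻ y in {y : EuclideanSpace ℝ (Fin n) | ‖x - y‖ < 4 * u},
            ENNReal.ofReal |g ((2 : ℝ) • x + (2 : ℝ) • t - y) * f y| :=
          mul_le_mul_right step2 _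
      _ = ENNReal.ofReal c1 *
            ∫⁻ z in {z : EuclideanSpace ℝ (Fin n) | ‖z‖ < 4 * u}, ENNReal.ofReal |f (x - z) * g' (x + z)| := by
          rw [hcv]
      _ ≤ ENNReal.ofReal c1 * (ENNReal.ofReal ((4 * u) ^ ((n:ℝ) - α)) * BM α f g' x) :=
          mul_le_mul_right step3 _
      _ = ENNReal.ofReal (c1 * (4 * u) ^ ((n:ℝ) - α)) * BM α f g' x := by
          rw [ENNReal.ofReal_mul hc1, mul_assoc]
      _ = ENNReal.ofReal (C₀ * (‖t‖ / δ) * (1/2 : ℝ) ^ k) * BM α f g' x := by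
          congr 2
          rw [hc1def]
          exact ck_arith α δ ‖t‖ u hδ k hu_def
  -- sum up
  calc (∑' k, ∫⁻ y in A k, ENNReal.ofReal
      (|‖x + t - y‖ ^ (α - (n:ℝ)) - ‖x - y‖ ^ (α - (n:ℝ))| *
        |g ((2 : ℝ) • x + (2 : ℝ) • t - y) * f y|))
      ≤ ∑' k : ℕ, ENNReal.ofReal (C₀ * (‖t‖ / δ) * (1/2 : ℝ) ^ k) * BM α f g' x :=
        ENNReal.tsum_le_tsum hterm
    _ = ∑' k : ℕ, (ENNReal.ofReal (C₀ * (‖t‖ / δ)) * BM α f g' x) * (2⁻¹ : ℝ≥0∞) ^ k := by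
        refine tsum_congr fun k => ?_
        rw [ENNReal.ofReal_mul (by positivity), ENNReal.ofReal_pow (by norm_num)]
        have : ENNReal.ofReal (1/2 : ℝ) = (2⁻¹ : ℝ≥0∞) := by
          rw [show (1/2:ℝ) = (2:ℝ)⁻¹ by norm_num, ENNReal.ofReal_inv_of_pos (by norm_num)]
          norm_num
        rw [this]
        ring
    _ = (ENNReal.ofReal (C₀ * (‖t‖ / δ)) * BM α f g' x) * ∑' k : ℕ, (2⁻¹ : ℝ≥0∞) ^ k :=
        ENNReal.tsum_mul_left
    _ = (ENNReal.ofReal (C₀ * (‖t‖ / δ)) * BM α f g' x) * 2 := by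
        rw [ENNReal.tsum_geometric, ENNReal.one_sub_inv_two, inv_inv]
    _ = ENNReal.ofReal (2 * C₀ * (‖t‖ / δ)) * BM α f g' x := by
        have h2 : ENNReal.ofReal (2 * C₀ * (‖t‖ / δ)) =
            2 * ENNReal.ofReal (C₀ * (‖t‖ / δ)) := by
          rw [mul_assoc, ENNReal.ofReal_mul (by norm_num : (0:ℝ) ≤ 2)]
          norm_num
        rw [h2]
        ring
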